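/- When students follow straightforward strategies and the round limit is not binding, the time-constrained dynamic mechanism terminates and its outcome equals the outcome of the student-proposing deferred acceptance algorithm applied to the true preferences. -/

import Mathlib

/-!
Call an option available to student `i` under an application profile if it is `none` or a
college to which fewer higher-priority students apply than it has seats. A serial-dictatorship
outcome gives every student her best available option; it is unique, by induction on priority,
and every stable matching is one.

Along a run, the first `q c` applicants to `c` above `i` are held and keep applying, so a college
full with applicants above `i` stays full. Hence every student always applies to an option at
least as good as each of her available ones. A rejected student's application is unavailable,
so at a fixed point all applications are held and available: the fixed profile is its own
tentative matching and the serial-dictatorship outcome. The run terminates because once the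
students above `i` have settled, `i` applies to an available option, which is never rejected.
-/

open Finset
open scoped Classical

/-- A common-priority college admissions market: `n` students (index `0` is the
highest priority / highest score), `m` colleges with capacities `q`, and for each
student an injective ranking of the options in `Option (Fin m)` (`none` = being
unassigned / matched to oneself); a lower rank means more preferred. -/
structure Market (n m : ℕ) where
  q : Fin m → ℕ
  rank : Fin n → Option (Fin m) → ℕ
  rank_inj : ∀ i, Function.Injective (rank i)

namespace Market

variable {n m : ℕ}

/-- `i` strictly prefers option `a` to option `b`. -/
def Prefers (M : Market n m) (i : Fin n) (a b : Option (Fin m)) : Prop :=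
  M.rank i a < M.rank i b

/-- A matching: each student gets a college or `none`, capacities respected. -/
def IsMatching (M : Market n m) (μ : Fin n → Option (Fin m)) : Prop :=
  ∀ c : Fin m, (univ.filter fun i => μ i = some c).card ≤ M.q c

/-- Individual rationality. -/
def IR (M : Market n m) (μ : Fin n → Option (Fin m)) : Prop :=
  ∀ i c, μ i = some c → M.Prefers i (some c) none

/-- `(i, c)` blocks `μ`: `i` prefers `c` to her assignment and `c` has a free
seat or holds a student of strictly lower priority. -/
def Blocks (M : Market n m) (μ : Fin n → Option (Fin m)) (i : Fin n) (c : Fin m) : Prop :=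
  M.Prefers i (some c) (μ i) ∧
    ((univ.filter fun j => μ j = some c).card < M.q c ∨ ∃ j, μ j = some c ∧ i < j)

/-- Stability: a matching, individually rational, with no blocking pair. -/
def Stable (M : Market n m) (μ : Fin n → Option (Fin m)) : Prop :=
  M.IsMatching μ ∧ M.IR μ ∧ ∀ i c, ¬ M.Blocks μ i c

/-- Given an application profile, student `i` is tentatively held: she applies to
some college `c` and fewer than `q c` higher-priority students apply to `c`. -/
def Held (M : Market n m) (app : Fin n → Option (Fin m)) (i : Fin n) : Prop :=
  ∃ c, app i = some c ∧ (univ.filter fun j => app j = some c ∧ j < i).card < M.q c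

/-- The tentative matching induced by an application profile. -/
noncomputable def tentative (M : Market n m) (app : Fin n → Option (Fin m)) (i : Fin n) :
    Option (Fin m) :=
  if M.Held app i then app i else none

/-- `i` meets the current cutoff of `c`: `c` has a free seat in the tentative
matching, or tentatively holds a student of lower priority than `i`. -/
def Feasible (M : Market n m) (app : Fin n → Option (Fin m)) (i : Fin n) (c : Fin m) : Prop :=
  (univ.filter fun j => M.tentative app j = some c).card < M.q c ∨
    ∃ j, M.tentative app j = some c ∧ i < j

/-- The option `o` is available to `i`: `none` always is, a college iff `i`
meets its cutoff. -/
def FeasibleOpt (M : Market n m) (app : Fin n → Option (Fin m)) (i : Fin n)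
    (o : Option (Fin m)) : Prop :=
  o = none ∨ ∃ c, o = some c ∧ M.Feasible app i c

/-- One round of simultaneous straightforward revision: students who are not
rejected keep their application; every rejected student applies to her most
preferred option among those whose cutoff she meets. -/
def Step (M : Market n m) (app app' : Fin n → Option (Fin m)) : Prop :=
  ∀ i,
    (M.tentative app i = app i → app' i = app i) ∧
    (M.tentative app i ≠ app i →
      M.FeasibleOpt app i (app' i) ∧
        ∀ o, M.FeasibleOpt app i o → M.rank i (app' i) ≤ M.rank i o)

/-- A run of the TCDM under straightforward strategies: `app t` is the profile of
applications in round `t + 1`; in round one every student applies to her most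
preferred option, and each later round is a straightforward revision.  The
outcome of the TCDM with round limit `T ≥ 1` is `M.tentative (app (T - 1))`. -/
def IsRun (M : Market n m) (app : ℕ → Fin n → Option (Fin m)) : Prop :=
  (∀ i o, M.rank i (app 0 i) ≤ M.rank i o) ∧ ∀ t, M.Step (app t) (app (t + 1))

/-- Admission cutoff of college `c` (student `i` has score `n - i`): the lowest
score among tentatively held students if `c` is at capacity, `0` otherwise. -/
noncomputable def cutoff (M : Market n m) (app : Fin n → Option (Fin m)) (c : Fin m) : ℕ :=
  if h : M.q c ≤ (univ.filter fun j => M.tentative app j = some c).card ∧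
      (univ.filter fun j => M.tentative app j = some c).Nonempty then
    n - ((univ.filter fun j => M.tentative app j = some c).max' h.2 : ℕ)
  else 0

/-- Serial dictatorship outcome: in priority order each student receives her most
preferred option among `none` and the colleges not yet filled by
higher-priority students. -/
def IsSerialDictatorship (M : Market n m) (μ : Fin n → Option (Fin m)) : Prop :=
  ∀ i,
    (μ i = none ∨ ∃ c, μ i = some c ∧
        (univ.filter fun j => j < i ∧ μ j = some c).card < M.q c) ∧
    ∀ o, (o = none ∨ ∃ c, o = some c ∧
        (univ.filter fun j => j < i ∧ μ j = some c).card < M.q c) →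
      M.rank i (μ i) ≤ M.rank i o

end Market

/-- The market induced by capacities `q` and a profile `P` of strict preferences
over colleges (every college acceptable, `none` ranked last), where the
preference order of student `i` ranks college `c` in position `P i c`. -/
noncomputable def mkMarket {n m : ℕ} (q : Fin m → ℕ) (P : Fin n → Equiv.Perm (Fin m)) :
    Market n m where
  q := q
  rank := fun i o => o.elim m fun c => (P i c : ℕ)
  rank_inj := by
    intro i a b h
    match a, b with
    | none, none => rfl
    | none, some c =>
      simp only [Option.elim] at h
      exact absurd h.symm (Nat.ne_of_lt (P i c).isLt)
    | some c, none =>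
      simp only [Option.elim] at h
      exact absurd h (Nat.ne_of_lt (P i c).isLt)
    | some c, some d =>
      simp only [Option.elim] at h
      exact congrArg some ((P i).injective (Fin.val_injective h))

theorem Finset.le_card_filter_card_filter_lt {α : Type*} [LinearOrder α] {s : Finset α} {q : ℕ}
    (h : q ≤ #s) : q ≤ #{j ∈ s | #{k ∈ s | k < j} < q} := by
  by_cases hN : ({j ∈ s | q ≤ #{k ∈ s | k < j}}).Nonempty
  · -- the least `j₀ ∈ s` with `q` predecessors in `s` is preceded only by elements with fewer
    set j₀ := ({j ∈ s | q ≤ #{k ∈ s | k < j}}).min' hN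
    have hj₀ : q ≤ #{k ∈ s | k < j₀} := (mem_filter.1 (min'_mem _ hN)).2
    refine hj₀.trans (card_le_card fun k hk => ?_)
    rw [mem_filter] at hk ⊢
    refine ⟨hk.1, lt_of_not_ge fun hq => hk.2.not_ge ?_⟩
    exact min'_le _ _ (mem_filter.2 ⟨hk.1, hq⟩)
  · rw [filter_true_of_mem fun j hj => lt_of_not_ge fun hq => hN ⟨j, mem_filter.2 ⟨hj, hq⟩⟩]
    exact h

namespace Market

variable {n m : ℕ}

def higherApplicants (ν : Fin n → Option (Fin m)) (i : Fin n) (c : Fin m) : Finset (Fin n) :=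
  {j | j < i ∧ ν j = some c}

/-- `o` is still open to `i` once every higher-priority student `j` has taken `ν j`. -/
def Available (M : Market n m) (ν : Fin n → Option (Fin m)) (i : Fin n)
    (o : Option (Fin m)) : Prop :=
  o = none ∨ ∃ c, o = some c ∧ #(higherApplicants ν i c) < M.q c

variable {M : Market n m} {ν ν' μ : Fin n → Option (Fin m)} {i j : Fin n} {c : Fin m}
  {o : Option (Fin m)}

theorem isSerialDictatorship_iff :
    M.IsSerialDictatorship μ ↔
      ∀ i, M.Available μ i (μ i) ∧ ∀ o, M.Available μ i o → M.rank i (μ i) ≤ M.rank i o :=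
  Iff.rfl

theorem mem_higherApplicants : j ∈ higherApplicants ν i c ↔ j < i ∧ ν j = some c := by
  simp [higherApplicants]

theorem higherApplicants_mono (hij : i ≤ j) : higherApplicants ν i c ⊆ higherApplicants ν j c :=
  fun k hk => by
    rw [mem_higherApplicants] at hk ⊢
    exact ⟨hk.1.trans_le hij, hk.2⟩

theorem filter_lt_higherApplicants (hji : j < i) :
    {k ∈ higherApplicants ν i c | k < j} = higherApplicants ν j c := by
  ext k
  simp only [mem_filter, mem_higherApplicants]
  exact ⟨fun h => ⟨h.2, h.1.2⟩, fun h => ⟨⟨h.1.trans hji, h.2⟩, h.1⟩⟩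

theorem higherApplicants_congr (h : ∀ j < i, μ j = ν j) :
    higherApplicants μ i c = higherApplicants ν i c :=
  filter_congr fun j _ => and_congr_right fun hj => by rw [h j hj]

theorem available_congr (h : ∀ j < i, μ j = ν j) : M.Available μ i o ↔ M.Available ν i o := by
  simp only [Available, higherApplicants_congr h]

theorem exists_free_seat_or_lower_of_card_higherApplicants_lt {q : ℕ} (hi : ν i ≠ some c)
    (h : #(higherApplicants ν i c) < q) : #{j | ν j = some c} < q ∨ ∃ j, ν j = some c ∧ i < j := by
  by_contra! ⟨hfull, hlower⟩
  refine (hfull.trans (card_le_card fun j hj => ?_)).not_gt h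
  rw [mem_filter] at hj
  rw [mem_higherApplicants]
  exact ⟨(hlower j hj.2).lt_of_ne fun hji => hi (hji ▸ hj.2), hj.2⟩

theorem held_iff : M.Held ν i ↔ ∃ c, ν i = some c ∧ #(higherApplicants ν i c) < M.q c := by
  simp only [Held, higherApplicants, and_comm]

theorem tentative_eq_some_iff :
    M.tentative ν j = some c ↔ ν j = some c ∧ #(higherApplicants ν j c) < M.q c := by
  rw [tentative]
  split_ifs with hheld
  · obtain ⟨c', hc', hlt⟩ := held_iff.1 hheld
    refine ⟨fun h => ⟨h, ?_⟩, And.left⟩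
    obtain rfl := Option.some_injective _ (hc'.symm.trans h)
    exact hlt
  · exact ⟨nofun, fun h => absurd (held_iff.2 ⟨c, h⟩) hheld⟩

theorem tentative_eq_self_iff : M.tentative ν i = ν i ↔ M.Available ν i (ν i) := by
  cases hi : ν i with
  | none => simp [tentative, hi, Available]
  | some c => simp [tentative_eq_some_iff, hi, Available]

theorem tentative_eq_self : M.tentative ν = ν ↔ ∀ i, M.Available ν i (ν i) := by
  simp only [funext_iff, tentative_eq_self_iff]

theorem higherApplicants_tentative_subset :
    higherApplicants (M.tentative ν) i c ⊆ higherApplicants ν i c := fun k hk => by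
  rw [mem_higherApplicants, tentative_eq_some_iff] at hk
  exact mem_higherApplicants.2 ⟨hk.1, hk.2.1⟩

/-- Among the applicants to `c` above `i`, the first `M.q c` are held. -/
theorem le_card_higherApplicants_tentative (h : M.q c ≤ #(higherApplicants ν i c)) :
    M.q c ≤ #(higherApplicants (M.tentative ν) i c) := by
  refine (le_card_filter_card_filter_lt h).trans (card_le_card fun k hk => ?_)
  rw [mem_filter] at hk
  have hki := (mem_higherApplicants.1 hk.1).1
  rw [filter_lt_higherApplicants hki] at hk
  rw [mem_higherApplicants, tentative_eq_some_iff]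
  exact ⟨hki, (mem_higherApplicants.1 hk.1).2, hk.2⟩

theorem not_feasible_of_le_card_higherApplicants (h : M.q c ≤ #(higherApplicants ν i c)) :
    ¬ M.Feasible ν i c := by
  rintro (hfree | ⟨j, hj, hij⟩)
  · have hsub : higherApplicants (M.tentative ν) i c ⊆
        ({j | M.tentative ν j = some c} : Finset (Fin n)) :=
      fun k hk => mem_filter.2 ⟨mem_univ k, (mem_higherApplicants.1 hk).2⟩
    exact hfree.not_ge ((le_card_higherApplicants_tentative h).trans (card_le_card hsub))
  · exact (tentative_eq_some_iff.1 hj).2.not_ge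
      (h.trans (card_le_card (higherApplicants_mono hij.le)))

theorem feasible_of_card_higherApplicants_lt (h : #(higherApplicants ν i c) < M.q c)
    (hi : ν i ≠ some c) : M.Feasible ν i c :=
  exists_free_seat_or_lower_of_card_higherApplicants_lt
    (fun ht => hi (tentative_eq_some_iff.1 ht).1)
    ((card_le_card higherApplicants_tentative_subset).trans_lt h)

theorem available_of_feasibleOpt (h : M.FeasibleOpt ν i o) : M.Available ν i o := by
  rcases h with rfl | ⟨c, rfl, hc⟩
  · exact Or.inl rfl
  · exact Or.inr ⟨c, rfl, lt_of_not_ge fun hle => not_feasible_of_le_card_higherApplicants hle hc⟩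

theorem feasibleOpt_of_available (ho : M.Available ν i o) (hrej : ¬ M.Available ν i (ν i)) :
    M.FeasibleOpt ν i o := by
  rcases ho with rfl | ⟨c, rfl, hc⟩
  · exact Or.inl rfl
  · refine Or.inr ⟨c, rfl, feasible_of_card_higherApplicants_lt hc fun hi => hrej ?_⟩
    rw [hi]
    exact Or.inr ⟨c, rfl, hc⟩

namespace Step

variable (hstep : M.Step ν ν')
include hstep

theorem apply_eq (h : M.Available ν i (ν i)) : ν' i = ν i :=
  (hstep i).1 (tentative_eq_self_iff.2 h)

theorem available (i : Fin n) : M.Available ν i (ν' i) := by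
  by_cases hkeep : M.Available ν i (ν i)
  · rwa [hstep.apply_eq hkeep]
  · exact available_of_feasibleOpt ((hstep i).2 (mt tentative_eq_self_iff.1 hkeep)).1

/-- Held applicants keep their applications. -/
theorem le_card_higherApplicants (h : M.q c ≤ #(higherApplicants ν i c)) :
    M.q c ≤ #(higherApplicants ν' i c) := by
  refine (le_card_higherApplicants_tentative h).trans (card_le_card fun k hk => ?_)
  rw [mem_higherApplicants] at hk ⊢
  have hkc := (tentative_eq_some_iff.1 hk.2).1
  exact ⟨hk.1, ((hstep k).1 (hk.2.trans hkc.symm)).trans hkc⟩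

theorem available_of_available (ho : M.Available ν' i o) : M.Available ν i o := by
  rcases ho with rfl | ⟨c, rfl, hc⟩
  · exact Or.inl rfl
  · exact Or.inr ⟨c, rfl, lt_of_not_ge fun h => hc.not_ge (hstep.le_card_higherApplicants h)⟩

theorem rank_le (h : ∀ o, M.Available ν i o → M.rank i (ν i) ≤ M.rank i o) :
    ∀ o, M.Available ν' i o → M.rank i (ν' i) ≤ M.rank i o := by
  intro o ho
  have ho' := hstep.available_of_available ho
  by_cases hkeep : M.Available ν i (ν i)
  · rw [hstep.apply_eq hkeep]
    exact h o ho'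
  · exact ((hstep i).2 (mt tentative_eq_self_iff.1 hkeep)).2 o (feasibleOpt_of_available ho' hkeep)

end Step

theorem Step.tentative_eq_of_self (hstep : M.Step ν ν) : M.tentative ν = ν :=
  tentative_eq_self.2 hstep.available

theorem Stable.isSerialDictatorship (hμ : M.Stable μ) : M.IsSerialDictatorship μ := by
  obtain ⟨hmatch, hIR, hblock⟩ := hμ
  refine isSerialDictatorship_iff.2 fun i => ⟨?_, fun o ho => ?_⟩
  · cases hi : μ i with
    | none => exact Or.inl rfl
    | some c =>
      refine Or.inr ⟨c, rfl, ?_⟩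
      have hsub : insert i (higherApplicants μ i c) ⊆ ({j | μ j = some c} : Finset (Fin n)) := by
        intro k hk
        rcases mem_insert.1 hk with rfl | hk
        · simpa using hi
        · simpa using (mem_higherApplicants.1 hk).2
      have hcard := (card_le_card hsub).trans (hmatch c)
      rwa [card_insert_of_notMem fun h => (mem_higherApplicants.1 h).1.false,
        Nat.add_one_le_iff] at hcard
  · by_contra! hlt
    rcases ho with rfl | ⟨c, rfl, hc⟩
    · cases hi : μ i with
      | none => exact (hi ▸ hlt).false
      | some c => exact (hIR i c hi).asymm (hi ▸ hlt)
    · refine hblock i c ⟨hlt, exists_free_seat_or_lower_of_card_higherApplicants_lt ?_ hc⟩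
      rintro hi
      exact (hi ▸ hlt).false

theorem IsSerialDictatorship.unique (hμ : M.IsSerialDictatorship μ)
    (hν : M.IsSerialDictatorship ν) : μ = ν := by
  funext i
  induction i using WellFoundedLT.induction with
  | _ i ih =>
    have hav := fun o => available_congr (M := M) (o := o) ih
    exact M.rank_inj i (le_antisymm ((hμ i).2 _ ((hav _).2 (hν i).1))
      ((hν i).2 _ ((hav _).1 (hμ i).1)))

namespace IsRun

variable {app : ℕ → Fin n → Option (Fin m)} (hrun : M.IsRun app)
include hrun

theorem rank_le (t : ℕ) (i : Fin n) :
    ∀ o, M.Available (app t) i o → M.rank i (app t i) ≤ M.rank i o := by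
  induction t with
  | zero => exact fun o _ => hrun.1 i o
  | succ t ih => exact (hrun.2 t).rank_le ih

theorem isSerialDictatorship {t : ℕ} (hfix : app (t + 1) = app t) :
    M.IsSerialDictatorship (app t) := by
  have hstep : M.Step (app t) (app t) := hfix ▸ hrun.2 t
  exact isSerialDictatorship_iff.2 fun i => ⟨hstep.available i, hrun.rank_le t i⟩

/-- Once the students above `i` have settled, `i` settles one round later: her application
is then available, and an available application is never rejected. -/
theorem apply_eq_of_settled_above {T : ℕ} (hT : ∀ t ≥ T, ∀ j < i, app t j = app T j) :
    ∀ t ≥ T + 1, app t i = app (T + 1) i := by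
  have hav : ∀ t ≥ T, M.Available (app t) i (app (T + 1) i) :=
    fun t ht => (available_congr (hT t ht)).2 ((hrun.2 T).available i)
  intro t ht
  induction t, ht using Nat.le_induction with
  | base => rfl
  | succ t ht ih =>
    rw [(hrun.2 t).apply_eq (by rw [ih]; exact hav t (by omega)), ih]

theorem exists_settled (k : ℕ) : ∃ T, ∀ t ≥ T, ∀ j : Fin n, j.val < k → app t j = app T j := by
  induction k with
  | zero => exact ⟨0, fun _ _ _ hj => absurd hj (Nat.not_lt_zero _)⟩
  | succ k ih =>
    obtain ⟨T, hT⟩ := ih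
    refine ⟨T + 1, fun t ht j hj => ?_⟩
    rcases Nat.lt_succ_iff_lt_or_eq.1 hj with hj | rfl
    · rw [hT t (by omega) j hj, hT (T + 1) (by omega) j hj]
    · exact hrun.apply_eq_of_settled_above (fun t ht j' hj' => hT t ht j' hj') t ht

theorem exists_fixed : ∃ t, app (t + 1) = app t := by
  obtain ⟨T, hT⟩ := hrun.exists_settled n
  exact ⟨T, funext fun j => hT (T + 1) (by omega) j j.isLt⟩

end IsRun

end Market

/-- under straightforward strategies the TCDM terminates (some
round sees no change), and when the round limit is not binding its outcome
equals the student-proposing deferred acceptance outcome, i.e. the unique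
stable matching. -/
theorem tcdm_terminates_and_equals_DA (n m : ℕ) (M : Market n m)
    (app : ℕ → Fin n → Option (Fin m)) (hrun : M.IsRun app) :
    (∃ t, app (t + 1) = app t) ∧
      ∀ t, app (t + 1) = app t →
        ∀ μ : Fin n → Option (Fin m), M.Stable μ → M.tentative (app t) = μ := by
  refine ⟨hrun.exists_fixed, fun t hfix μ hμ => ?_⟩
  have hstep : M.Step (app t) (app t) := hfix ▸ hrun.2 t
  rw [hstep.tentative_eq_of_self]
  exact (hrun.isSerialDictatorship hfix).unique hμ.isSerialDictatorship
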